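/- In ℂ[x,y]³ with the coordinatewise Drury–Arveson norm, let f₁ = (x, 0, y) and f₂ = (0, x, y). Then for all polynomials p, q ∈ ℂ[x,y], writing h = p·f₁ + q·f₂, one has ‖p·(f₁ − f₂)‖² ≤ 2‖h‖² and ‖(p+q)·f₂‖ ≤ √3·‖h‖. Consequently {f₁ − f₂, f₂} is a stable generating set for the ℂ[x,y]-submodule of ℂ[x,y]³ generated by f₁ and f₂: every h in that module can be written h = a·(f₁−f₂) + b·f₂ with ‖a·(f₁−f₂)‖ + ‖b·f₂‖ ≤ (√2 + √3)‖h‖. -/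
import Mathlib


open scoped BigOperators
open MvPolynomial
noncomputable section

/-- The weight of the monomial `x^k y^l` in the Drury–Arveson norm on `ℂ[x,y]`:
`k! l!/(k+l)!`. -/
def wt (d : ℕ) (t : ℝ) (α : Fin d →₀ ℕ) : ℝ :=
  (∏ i, (Nat.factorial (α i) : ℝ)) /
    ∏ j ∈ Finset.range (∑ i, α i), ((d : ℝ) + t + (j + 1))

/-- The squared norm `‖f‖_t²` of a polynomial (distinct monomials orthogonal). -/
def tNormSq (d : ℕ) (t : ℝ) (f : MvPolynomial (Fin d) ℂ) : ℝ :=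
  ∑ α ∈ f.support, ‖MvPolynomial.coeff α f‖ ^ 2 * wt d t α

/-- The Drury–Arveson norm on `ℂ[x,y]³`:
`‖(h₁,h₂,h₃)‖² = ‖h₁‖² + ‖h₂‖² + ‖h₃‖²`. -/
def daNormVec (h : Fin 3 → MvPolynomial (Fin 2) ℂ) : ℝ :=
  Real.sqrt (∑ i, tNormSq 2 (-2) (h i))

lemma wt_nonneg (α : Fin 2 →₀ ℕ) : 0 ≤ wt 2 (-2) α := by
  unfold wt
  apply div_nonneg
  · positivity
  · apply Finset.prod_nonneg
    intro j _
    have : ((2:ℕ) : ℝ) + (-2) + (j + 1) = (j:ℝ) + 1 := by push_cast; ring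
    rw [this]; positivity

lemma tNormSq_nonneg (f : MvPolynomial (Fin 2) ℂ) : 0 ≤ tNormSq 2 (-2) f := by
  apply Finset.sum_nonneg
  intro α _
  exact mul_nonneg (by positivity) (wt_nonneg α)

lemma tNormSq_eq_sum {d : ℕ} {t : ℝ} (f : MvPolynomial (Fin d) ℂ) {S : Finset (Fin d →₀ ℕ)}
    (hS : f.support ⊆ S) :
    tNormSq d t f = ∑ α ∈ S, ‖MvPolynomial.coeff α f‖ ^ 2 * wt d t α := by
  apply Finset.sum_subset hS
  intro α _ hα
  rw [MvPolynomial.notMem_support_iff.mp hα]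
  simp

lemma tNormSq_zero (d : ℕ) (t : ℝ) : tNormSq d t (0 : MvPolynomial (Fin d) ℂ) = 0 := by
  simp [tNormSq]

lemma tNormSq_neg (d : ℕ) (t : ℝ) (f : MvPolynomial (Fin d) ℂ) :
    tNormSq d t (-f) = tNormSq d t f := by
  unfold tNormSq
  rw [MvPolynomial.support_neg]
  apply Finset.sum_congr rfl
  intro α _
  rw [MvPolynomial.coeff_neg, norm_neg]

lemma tNormSq_add_le (f g : MvPolynomial (Fin 2) ℂ) :
    tNormSq 2 (-2) (f + g) ≤ 2 * tNormSq 2 (-2) f + 2 * tNormSq 2 (-2) g := by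
  have hS : (f + g).support ⊆ f.support ∪ g.support := MvPolynomial.support_add
  rw [tNormSq_eq_sum (f + g) hS,
    tNormSq_eq_sum f (Finset.subset_union_left),
    tNormSq_eq_sum g (Finset.subset_union_right),
    Finset.mul_sum, Finset.mul_sum, ← Finset.sum_add_distrib]
  apply Finset.sum_le_sum
  intro α _
  have hw := wt_nonneg α
  have h1 : ‖MvPolynomial.coeff α (f + g)‖ ^ 2 ≤
      2 * ‖MvPolynomial.coeff α f‖ ^ 2 + 2 * ‖MvPolynomial.coeff α g‖ ^ 2 := by
    rw [MvPolynomial.coeff_add]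
    have := norm_add_le (MvPolynomial.coeff α f) (MvPolynomial.coeff α g)
    nlinarith [mul_self_le_mul_self (norm_nonneg (MvPolynomial.coeff α f + MvPolynomial.coeff α g)) this,
      sq_nonneg (‖MvPolynomial.coeff α f‖ - ‖MvPolynomial.coeff α g‖)]
  nlinarith

lemma sum_h (p q : MvPolynomial (Fin 2) ℂ) :
    ∑ i, tNormSq 2 (-2)
        ((p • ![X 0, 0, X 1] + q • ![0, X 0, X 1] : Fin 3 → MvPolynomial (Fin 2) ℂ) i)
      = tNormSq 2 (-2) (p * X 0) + tNormSq 2 (-2) (q * X 0)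
        + tNormSq 2 (-2) (p * X 1 + q * X 1) := by
  simp [Fin.sum_univ_three, smul_eq_mul, tNormSq_zero]

lemma sum_diff (p : MvPolynomial (Fin 2) ℂ) :
    ∑ i, tNormSq 2 (-2)
        ((p • (![X 0, 0, X 1] - ![0, X 0, X 1]) : Fin 3 → MvPolynomial (Fin 2) ℂ) i)
      = 2 * tNormSq 2 (-2) (p * X 0) := by
  simp [Fin.sum_univ_three, smul_eq_mul, Pi.sub_apply, mul_neg, tNormSq_neg, tNormSq_zero]
  ring

lemma sum_b (b : MvPolynomial (Fin 2) ℂ) :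
    ∑ i, tNormSq 2 (-2) ((b • ![0, X 0, X 1] : Fin 3 → MvPolynomial (Fin 2) ℂ) i)
      = tNormSq 2 (-2) (b * X 0) + tNormSq 2 (-2) (b * X 1) := by
  simp [Fin.sum_univ_three, smul_eq_mul, tNormSq_zero]

/-- In `ℂ[x,y]³`, let `f₁ = (x,0,y)` and `f₂ = (0,x,y)`.  For all
`p, q ∈ ℂ[x,y]` and `h = p f₁ + q f₂` one has `‖p(f₁−f₂)‖² ≤ 2‖h‖²` and
`‖(p+q)f₂‖ ≤ √3 ‖h‖`.  Consequently `{f₁ − f₂, f₂}` is a stable generating set for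
the submodule generated by `f₁, f₂`: every `h` in it can be written
`h = a(f₁−f₂) + b f₂` with `‖a(f₁−f₂)‖ + ‖b f₂‖ ≤ (√2 + √3)‖h‖`. -/
theorem stmt_17
    (f₁ f₂ : Fin 3 → MvPolynomial (Fin 2) ℂ)
    (hf₁ : f₁ = ![X 0, 0, X 1])
    (hf₂ : f₂ = ![0, X 0, X 1]) :
    (∀ p q : MvPolynomial (Fin 2) ℂ,
      daNormVec (p • (f₁ - f₂)) ^ 2 ≤ 2 * daNormVec (p • f₁ + q • f₂) ^ 2 ∧
      daNormVec ((p + q) • f₂) ≤ Real.sqrt 3 * daNormVec (p • f₁ + q • f₂)) ∧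
    ∀ h ∈ Submodule.span (MvPolynomial (Fin 2) ℂ) {f₁, f₂},
      ∃ a b : MvPolynomial (Fin 2) ℂ,
        h = a • (f₁ - f₂) + b • f₂ ∧
        daNormVec (a • (f₁ - f₂)) + daNormVec (b • f₂) ≤
          (Real.sqrt 2 + Real.sqrt 3) * daNormVec h := by
  subst hf₁ hf₂
  have key : ∀ p q : MvPolynomial (Fin 2) ℂ,
      daNormVec (p • (![X 0, 0, X 1] - ![0, X 0, X 1])) ^ 2
        ≤ 2 * daNormVec (p • ![X 0, 0, X 1] + q • ![0, X 0, X 1]) ^ 2 ∧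
      daNormVec ((p + q) • ![0, X 0, X 1])
        ≤ Real.sqrt 3 * daNormVec (p • ![X 0, 0, X 1] + q • ![0, X 0, X 1]) := by
    intro p q
    have ha := tNormSq_nonneg (p * X 0)
    have hb := tNormSq_nonneg (q * X 0)
    have hc := tNormSq_nonneg (p * X 1 + q * X 1)
    have hd := tNormSq_add_le (p * X 0) (q * X 0)
    constructor
    · rw [daNormVec, daNormVec, sum_diff, sum_h,
        Real.sq_sqrt (by linarith), Real.sq_sqrt (by linarith)]
      linarith
    · rw [daNormVec, daNormVec, sum_b, sum_h, add_mul, add_mul,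
        ← Real.sqrt_mul (by norm_num : (0:ℝ) ≤ 3)]
      apply Real.sqrt_le_sqrt
      linarith
  refine ⟨key, ?_⟩
  intro h hh
  rw [Submodule.mem_span_pair] at hh
  obtain ⟨p, q, hpq⟩ := hh
  refine ⟨p, p + q, ?_, ?_⟩
  · rw [← hpq]; module
  · obtain ⟨h1, h2⟩ := key p q
    rw [← hpq]
    have hX : (0:ℝ) ≤ daNormVec (p • (![X 0, 0, X 1] - ![0, X 0, X 1])) :=
      Real.sqrt_nonneg _
    have hY : (0:ℝ) ≤ daNormVec (p • ![X 0, 0, X 1] + q • ![0, X 0, X 1]) :=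
      Real.sqrt_nonneg _
    have hX2 : daNormVec (p • (![X 0, 0, X 1] - ![0, X 0, X 1]))
        ≤ Real.sqrt 2 * daNormVec (p • ![X 0, 0, X 1] + q • ![0, X 0, X 1]) := by
      calc daNormVec (p • (![X 0, 0, X 1] - ![0, X 0, X 1]))
          = Real.sqrt (daNormVec (p • (![X 0, 0, X 1] - ![0, X 0, X 1])) ^ 2) :=
            (Real.sqrt_sq hX).symm
        _ ≤ Real.sqrt (2 * daNormVec (p • ![X 0, 0, X 1] + q • ![0, X 0, X 1]) ^ 2) :=
            Real.sqrt_le_sqrt h1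
        _ = Real.sqrt 2 * daNormVec (p • ![X 0, 0, X 1] + q • ![0, X 0, X 1]) := by
            rw [Real.sqrt_mul (by norm_num : (0:ℝ) ≤ 2), Real.sqrt_sq hY]
    rw [add_mul]
    linarith
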